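/- Let (A•, ∂, ∂_J) be as above, satisfying the ∂∂_J-lemma. Then the natural projection p : (A• ∩ ker ∂_J, ∂) → (H•_{∂_J}, ∂) onto ∂_J-cohomology (with induced differential ∂) induces an isomorphism on ∂-cohomology. -/

import Mathlib

/-!
Both halves are applications of the `∂∂_J`-lemma. Injectivity: a class `[α]` that becomes
`∂`-exact in `H_{∂_J}` has `α = ∂β + ∂_Jγ` with `α` closed for both differentials, so
`α = ∂∂_Jη`, and `∂_Jη` is a `∂_J`-closed `∂`-primitive. Surjectivity: if `∂α = ∂_Jγ` with
`∂_Jα = 0`, then `∂α` is closed for both differentials and `∂_J`-exact, so `∂α = ∂∂_Jη`, and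
`α - ∂_Jη` is a representative of `[α]` closed for both differentials.
-/

namespace Module.End

variable {R M : Type*} [Semiring R] [AddCommMonoid M] [Module R M] {f g : Module.End R M}

theorem apply_apply_eq_zero_of_mul_eq_zero (h : f * g = 0) (x : M) : f (g x) = 0 := by
  rw [← mul_apply, h, LinearMap.zero_apply]

theorem apply_apply_eq_zero_of_anticomm (h : f * g + g * f = 0) {x : M} (hx : g x = 0) :
    g (f x) = 0 := by
  simpa [hx] using LinearMap.congr_fun h x

end Module.End

section DelDelJLemma

open Module.End

variable {R M : Type*} [Ring R] [AddCommGroup M] [Module R M]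

def SatisfiesDelDelJLemma (d dJ : Module.End R M) : Prop :=
  ∀ α : M, d α = 0 → dJ α = 0 → (∃ β γ : M, α = d β + dJ γ) → ∃ η : M, α = d (dJ η)

namespace SatisfiesDelDelJLemma

variable {d dJ : Module.End R M}

theorem exists_delJ_closed_primitive (hlemma : SatisfiesDelDelJLemma d dJ)
    (hdJ2 : dJ * dJ = 0) {α : M} (hdα : d α = 0) (hJα : dJ α = 0)
    (hexact : ∃ β γ : M, α = d β + dJ γ) : ∃ β : M, dJ β = 0 ∧ α = d β := by
  obtain ⟨η, hη⟩ := hlemma α hdα hJα hexact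
  exact ⟨dJ η, apply_apply_eq_zero_of_mul_eq_zero hdJ2 η, hη⟩

theorem exists_closed_add_delJ (hlemma : SatisfiesDelDelJLemma d dJ)
    (hd2 : d * d = 0) (hdJ2 : dJ * dJ = 0) (hanti : d * dJ + dJ * d = 0)
    {α γ : M} (hJα : dJ α = 0) (hγ : d α = dJ γ) :
    ∃ β : M, dJ β = 0 ∧ d β = 0 ∧ ∃ η : M, α = β + dJ η := by
  obtain ⟨η, hη⟩ := hlemma (d α) (apply_apply_eq_zero_of_mul_eq_zero hd2 α)
    (apply_apply_eq_zero_of_anticomm hanti hJα) ⟨0, γ, by rw [map_zero, zero_add, hγ]⟩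
  refine ⟨α - dJ η, ?_, ?_, η, (sub_add_cancel α _).symm⟩
  · rw [map_sub, hJα, apply_apply_eq_zero_of_mul_eq_zero hdJ2, sub_zero]
  · rw [map_sub, ← hη, sub_self]

end SatisfiesDelDelJLemma

end DelDelJLemma

/-- **Lemma 4.3.** Let `(A•, ∂, ∂_J)` be a complex with two anticommuting degree-1
differentials satisfying the `∂∂_J`-lemma. Then the natural projection
`p : (A• ∩ ker ∂_J, ∂) → (H•_{∂_J}, ∂)` onto `∂_J`-cohomology (with the induced
differential `∂ [α] = [∂α]`) induces an isomorphism on `∂`-cohomology, stated here by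
unfolding injectivity and surjectivity of the induced map. -/
theorem projection_to_delJ_cohomology_quasi_iso
    {V : Type*} [AddCommGroup V] [Module ℂ V]
    (del delJ : Module.End ℂ V)
    (hd2 : del * del = 0) (hdJ2 : delJ * delJ = 0)
    (hanti : del * delJ + delJ * del = 0)
    (hlemma : ∀ α : V, del α = 0 → delJ α = 0 → (∃ β γ : V, α = del β + delJ γ) →
      ∃ η : V, α = del (delJ η)) :
    -- injectivity of H(p): if α ∈ ker ∂_J is ∂-closed and its class maps to a
    -- ∂-exact class in (H_{∂_J}, ∂), then α is ∂-exact within ker ∂_J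
    (∀ α : V, delJ α = 0 → del α = 0 →
      (∃ β γ : V, delJ β = 0 ∧ α = del β + delJ γ) →
      ∃ β' : V, delJ β' = 0 ∧ α = del β') ∧
    -- surjectivity of H(p): every class in H_{∂_J} killed by the induced ∂ is, up to
    -- the induced ∂-exact and ∂_J-exact terms, represented by α ∈ ker ∂_J ∩ ker ∂
    (∀ α : V, delJ α = 0 → (∃ γ : V, del α = delJ γ) →
      ∃ β μ ν : V, delJ β = 0 ∧ del β = 0 ∧ delJ μ = 0 ∧ α = β + del μ + delJ ν) := by
  refine ⟨fun α hJα hdα ⟨β, γ, _, hα⟩ => ?_, fun α hJα ⟨γ, hγ⟩ => ?_⟩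
  · exact SatisfiesDelDelJLemma.exists_delJ_closed_primitive hlemma hdJ2 hdα hJα ⟨β, γ, hα⟩
  · obtain ⟨β, hJβ, hdβ, η, rfl⟩ :=
      SatisfiesDelDelJLemma.exists_closed_add_delJ hlemma hd2 hdJ2 hanti hJα hγ
    exact ⟨β, 0, η, hJβ, hdβ, map_zero delJ, by rw [map_zero, add_zero]⟩
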